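/- arXiv:1902.02776 — 3 statements merged into one kernel-verified Lean document; each statement's English description precedes it below -/
import Mathlib

section
/- In the beta-binomial regression model with no covariates for the mean (θ = (β0, β0*, β*)) and logit links, if all observed counts are zero (W_i = 0 for all i), then the supremum over β0 of the log-likelihood equals 0, attained in the limit β0 → −∞. -/
/-! With no successes each likelihood factor is
`B(a₁, a₂ + M) / B(a₁, a₂) = ∏_{j<M} (a₂ + j) / (a₁ + a₂ + j)`.
The logit parametrisation keeps `a₁ + a₂ = exp (-(β₀* + X*ᵀβ*))` independent of `β₀`, while `a₂`
increases to this value as `β₀ → -∞`. So every factor is at most `1` and tends to `1`: the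
log-likelihood is nonpositive and tends to `0`. -/

open Filter

noncomputable def betaFun (x y : ℝ) : ℝ :=
  Real.Gamma x * Real.Gamma y / Real.Gamma (x + y)

open Finset Real Topology

theorem Real.Gamma_add_nat_eq_mul_prod (x : ℝ) (hx : ∀ m : ℕ, x + m ≠ 0) (M : ℕ) :
    Gamma (x + M) = Gamma x * ∏ j ∈ range M, (x + j) := by
  induction M with
  | zero => simp
  | succ m ih =>
    rw [Nat.cast_succ, ← add_assoc, Gamma_add_one (hx m), ih, prod_range_succ]
    ring

theorem betaFun_add_nat_div_betaFun {a b : ℝ} (ha : 0 < a) (hb : 0 < b) (M : ℕ) :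
    betaFun a (b + M) / betaFun a b = ∏ j ∈ range M, (b + j) / (a + b + j) := by
  have hab : 0 < a + b := by linarith
  rw [prod_div_distrib, betaFun, betaFun, ← add_assoc,
    Gamma_add_nat_eq_mul_prod b (fun m => by positivity),
    Gamma_add_nat_eq_mul_prod (a + b) (fun m => by positivity)]
  have := Gamma_pos_of_pos ha
  have := Gamma_pos_of_pos hb
  have := Gamma_pos_of_pos hab
  have : 0 < ∏ j ∈ range M, (a + b + j) := prod_pos fun j _ => by positivity
  field_simp

theorem log_prod_add_div_add_nonpos {b c : ℝ} (hb : 0 ≤ b) (hbc : b ≤ c) (M : ℕ) :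
    log (∏ j ∈ range M, (b + j) / (c + j)) ≤ 0 := by
  have hb' (j : ℕ) : 0 ≤ b + j := add_nonneg hb j.cast_nonneg
  have hc' (j : ℕ) : 0 ≤ c + j := add_nonneg (hb.trans hbc) j.cast_nonneg
  exact log_nonpos (prod_nonneg fun j _ => div_nonneg (hb' j) (hc' j))
    (prod_le_one (fun j _ => div_nonneg (hb' j) (hc' j))
      fun j _ => div_le_one_of_le₀ (by linarith) (hc' j))

theorem tendsto_log_prod_add_div_add {α : Type*} {l : Filter α} {f : α → ℝ} {c : ℝ}
    (hc : 0 < c) (hf : Tendsto f l (𝓝 c)) (M : ℕ) :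
    Tendsto (fun x => log (∏ j ∈ range M, (f x + j) / (c + j))) l (𝓝 0) := by
  have hprod : Tendsto (fun x => ∏ j ∈ range M, (f x + j) / (c + j)) l (𝓝 1) := by
    have hcont : Continuous fun b : ℝ => ∏ j ∈ range M, (b + j) / (c + j) := by fun_prop
    have hone : ∏ j ∈ range M, (c + j) / (c + j) = 1 :=
      prod_eq_one fun j _ => div_self (by positivity)
    exact hone ▸ (hcont.tendsto c).comp hf
  exact log_one ▸ (continuousAt_log one_ne_zero).tendsto.comp hprod

theorem div_one_add_exp_neg_add_div_one_add_exp (s β : ℝ) :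
    s / (1 + exp (-β)) + s / (1 + exp β) = s := by
  rw [exp_neg]
  field_simp
  ring

theorem tendsto_div_one_add_exp_atBot (s : ℝ) :
    Tendsto (fun β => s / (1 + exp β)) atBot (𝓝 s) := by
  have h := (tendsto_const_nhds (x := s)).div (tendsto_const_nhds.add tendsto_exp_atBot)
    (by norm_num : (1 : ℝ) + 0 ≠ 0)
  rwa [add_zero, div_one] at h

/-- Lemma C.1: in the beta-binomial regression model with no covariates for the mean,
parameters `θ = (β0, β0*, β*)` and logit links, where
`a_{1,i} = e^{-β0* - X_i*ᵀβ*}/(1 + e^{-β0})` and `a_{2,i} = e^{-β0* - X_i*ᵀβ*}/(1 + e^{β0})`,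
if all observed counts are zero, then the supremum over `β0` of the log-likelihood
equals `0`, attained in the limit `β0 → -∞`. -/
theorem supLoglikAllZeroCounts (n k : ℕ) (M W : Fin n → ℕ) (hW : ∀ i, W i = 0)
    (Xs : Fin n → Fin k → ℝ) (β0star : ℝ) (βstar : Fin k → ℝ)
    (a1 a2 : ℝ → Fin n → ℝ)
    (ha1 : ∀ β0 i, a1 β0 i =
      Real.exp (-(β0star + ∑ j, Xs i j * βstar j)) / (1 + Real.exp (-β0)))
    (ha2 : ∀ β0 i, a2 β0 i =
      Real.exp (-(β0star + ∑ j, Xs i j * βstar j)) / (1 + Real.exp β0))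
    (ℓ : ℝ → ℝ)
    (hℓ : ∀ β0, ℓ β0 = ∑ i, Real.log (((M i).choose (W i) : ℝ) *
      betaFun (a1 β0 i + W i) (a2 β0 i + (M i : ℝ) - W i) / betaFun (a1 β0 i) (a2 β0 i))) :
    IsLUB (Set.range ℓ) 0 ∧ Tendsto ℓ atBot (nhds 0) := by
  set s : Fin n → ℝ := fun i => exp (-(β0star + ∑ j, Xs i j * βstar j))
  have hs : ∀ i, 0 < s i := fun i => exp_pos _
  have hsum : ∀ β0 i, a1 β0 i + a2 β0 i = s i := fun β0 i => by
    rw [ha1, ha2, div_one_add_exp_neg_add_div_one_add_exp]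
  have ha1_pos : ∀ β0 i, 0 < a1 β0 i := fun β0 i => by rw [ha1]; positivity
  have ha2_pos : ∀ β0 i, 0 < a2 β0 i := fun β0 i => by rw [ha2]; positivity
  have hℓ_prod : ∀ β0, ℓ β0 = ∑ i, log (∏ j ∈ range (M i), (a2 β0 i + j) / (s i + j)) := by
    intro β0
    simp only [hℓ, hW, Nat.choose_zero_right, Nat.cast_zero, Nat.cast_one, one_mul, add_zero,
      sub_zero, betaFun_add_nat_div_betaFun (ha1_pos β0 _) (ha2_pos β0 _), hsum]
  have hle : ∀ β0, ℓ β0 ≤ 0 := fun β0 => by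
    rw [hℓ_prod]
    exact sum_nonpos fun i _ => log_prod_add_div_add_nonpos (ha2_pos β0 i).le
      (by linarith [hsum β0 i, ha1_pos β0 i]) _
  have htend : Tendsto ℓ atBot (𝓝 0) := by
    rw [funext hℓ_prod, ← sum_const_zero (s := (univ : Finset (Fin n)))]
    refine tendsto_finsetSum _ fun i _ => tendsto_log_prod_add_div_add (hs i) ?_ _
    simpa only [ha2] using tendsto_div_one_add_exp_atBot (s i)
  exact ⟨isLUB_of_mem_closure (fun _ ⟨β0, hβ0⟩ => hβ0 ▸ hle β0)
    (mem_closure_of_tendsto htend (Eventually.of_forall Set.mem_range_self)), htend⟩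
end

section
/- Consider the beta-binomial regression model with a single binary covariate X_i = X_i* ∈ {0,1} used for both the mean and overdispersion, logit links, and parameters (β0, β1, β0*, β1*). If Σ_{i : X_i = 0} W_i = 0 and Σ_{i : X_i = 1} W_i > 0, then the likelihood ratio test statistic for H0: β1* = 0, namely 2(sup_{β0,β1,β0*,β1*} ℓ − sup_{β0,β1,β0*} ℓ|_{β1*=0}), equals 0. -/
/-- The logistic function. -/
noncomputable def logistic (y : ℝ) : ℝ := Real.exp y / (1 + Real.exp y)

/-- Beta-binomial log-likelihood with a single binary covariate `X_i = X_i*` used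
for both the mean and overdispersion, logit links, parameters `(β0, β1, β0*, β1*)`:
`μ_i = logistic(β0 + β1 X_i)`, `φ_i = logistic(β0* + β1* X_i)`,
`a_{1,i} = μ_i(1-φ_i)/φ_i`, `a_{2,i} = (1-μ_i)(1-φ_i)/φ_i`. -/
noncomputable def ellBB (n : ℕ) (M W : Fin n → ℕ) (X : Fin n → ℝ)
    (β0 β1 β0s β1s : ℝ) : ℝ :=
  ∑ i, Real.log (((M i).choose (W i) : ℝ) *
    betaFun (logistic (β0 + β1 * X i) * (1 - logistic (β0s + β1s * X i)) /
        logistic (β0s + β1s * X i) + W i)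
      ((1 - logistic (β0 + β1 * X i)) * (1 - logistic (β0s + β1s * X i)) /
        logistic (β0s + β1s * X i) + (M i : ℝ) - W i) /
    betaFun (logistic (β0 + β1 * X i) * (1 - logistic (β0s + β1s * X i)) /
        logistic (β0s + β1s * X i))
      ((1 - logistic (β0 + β1 * X i)) * (1 - logistic (β0s + β1s * X i)) /
        logistic (β0s + β1s * X i)))

open Filter Topology Finset

lemma logistic_pos (t : ℝ) : 0 < logistic t :=
  div_pos (Real.exp_pos t) (by positivity)

lemma logistic_lt_one (t : ℝ) : logistic t < 1 := by
  rw [logistic, div_lt_one (by positivity)]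
  linarith [Real.exp_pos t]

lemma tendsto_logistic_atBot : Tendsto logistic atBot (𝓝 0) := by
  rw [show (0 : ℝ) = 0 / (1 + 0) by norm_num]
  exact Real.tendsto_exp_atBot.div (tendsto_const_nhds.add Real.tendsto_exp_atBot) (by norm_num)

section Beta

variable {x y : ℝ}

lemma betaFun_pos (hx : 0 < x) (hy : 0 < y) : 0 < betaFun x y :=
  div_pos (mul_pos (Real.Gamma_pos_of_pos hx) (Real.Gamma_pos_of_pos hy))
    (Real.Gamma_pos_of_pos (by linarith))

lemma betaFun_comm (x y : ℝ) : betaFun x y = betaFun y x := by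
  rw [betaFun, betaFun, add_comm, mul_comm]

lemma betaFun_add_one_left (hx : x ≠ 0) (hxy : x + y ≠ 0) :
    betaFun (x + 1) y = x / (x + y) * betaFun x y := by
  rw [betaFun, betaFun, show x + 1 + y = x + y + 1 by ring, Real.Gamma_add_one hx,
    Real.Gamma_add_one hxy, mul_assoc x, mul_div_mul_comm]

lemma betaFun_add_one_right (hy : y ≠ 0) (hxy : x + y ≠ 0) :
    betaFun x (y + 1) = y / (x + y) * betaFun x y := by
  rw [betaFun_comm, betaFun_add_one_left hy (by rwa [add_comm]), betaFun_comm, add_comm y]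

lemma betaFun_add_nat_left_le (hx : 0 < x) (hy : 0 < y) (U : ℕ) :
    betaFun (x + U) y ≤ betaFun x y := by
  have hstep : ∀ k : ℕ, betaFun (x + ((k + 1 : ℕ) : ℝ)) y ≤ betaFun (x + k) y := by
    intro k
    have hxk : 0 < x + k := by positivity
    rw [Nat.cast_succ, ← add_assoc, betaFun_add_one_left hxk.ne' (by positivity)]
    exact mul_le_of_le_one_left (betaFun_pos hxk hy).le
      ((div_le_one (by positivity)).mpr (by linarith))
  simpa using antitone_nat_of_succ_le (f := fun k : ℕ => betaFun (x + k) y) hstep (Nat.zero_le U)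

lemma betaFun_add_nat_le (hx : 0 < x) (hy : 0 < y) (U V : ℕ) :
    betaFun (x + U) (y + V) ≤ betaFun x y :=
  calc betaFun (x + U) (y + V) = betaFun (y + V) (x + U) := betaFun_comm _ _
    _ ≤ betaFun y (x + U) := betaFun_add_nat_left_le hy (by positivity) V
    _ = betaFun (x + U) y := betaFun_comm _ _
    _ ≤ betaFun x y := betaFun_add_nat_left_le hx hy U

lemma betaFun_add_nat_right (hx : 0 < x) (hy : 0 < y) (m : ℕ) :
    betaFun x (y + m) = betaFun x y * ∏ k ∈ range m, (y + k) / (x + y + k) := by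
  induction m with
  | zero => simp
  | succ m ih =>
    rw [Nat.cast_succ, ← add_assoc, betaFun_add_one_right (by positivity) (by positivity), ih,
      prod_range_succ, ← add_assoc]
    ring

end Beta

noncomputable def betaBinomPmf (a b : ℝ) (m w : ℕ) : ℝ :=
  (m.choose w : ℝ) * betaFun (a + w) (b + m - w) / betaFun a b

section BetaBinom

variable {a b : ℝ}

lemma betaBinomPmf_pos (ha : 0 < a) (hb : 0 < b) {m w : ℕ} (hw : w ≤ m) :
    0 < betaBinomPmf a b m w := by
  have hb' : 0 < b + m - w := by
    have : (w : ℝ) ≤ m := by exact_mod_cast hw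
    linarith
  have hchoose : (0 : ℝ) < m.choose w := by exact_mod_cast Nat.choose_pos hw
  exact div_pos (mul_pos hchoose (betaFun_pos (by positivity) hb')) (betaFun_pos ha hb)

lemma betaBinomPmf_le_choose (ha : 0 < a) (hb : 0 < b) {m w : ℕ} (hw : w ≤ m) :
    betaBinomPmf a b m w ≤ m.choose w := by
  have hB : betaFun (a + w) (b + m - w) ≤ betaFun a b := by
    rw [add_sub_assoc, ← Nat.cast_sub hw]
    exact betaFun_add_nat_le ha hb w (m - w)
  rw [betaBinomPmf, div_le_iff₀ (betaFun_pos ha hb)]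
  exact mul_le_mul_of_nonneg_left hB (Nat.cast_nonneg _)

lemma betaBinomPmf_zero (ha : 0 < a) (hb : 0 < b) (m : ℕ) :
    betaBinomPmf a b m 0 = ∏ k ∈ range m, (b + k) / (a + b + k) := by
  rw [betaBinomPmf, Nat.choose_zero_right, Nat.cast_zero, Nat.cast_one, add_zero, sub_zero,
    one_mul, betaFun_add_nat_right ha hb, mul_div_cancel_left₀ _ (betaFun_pos ha hb).ne']

end BetaBinom

/-- The shape parameters `a₁, a₂` of `ellBB` on the logit scales `p` (mean) and
`q` (overdispersion). -/
noncomputable def bbShape₁ (p q : ℝ) : ℝ := logistic p * (1 - logistic q) / logistic q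

noncomputable def bbShape₂ (p q : ℝ) : ℝ := (1 - logistic p) * (1 - logistic q) / logistic q

lemma bbShape₁_pos (p q : ℝ) : 0 < bbShape₁ p q :=
  div_pos (mul_pos (logistic_pos p) (by linarith [logistic_lt_one q])) (logistic_pos q)

lemma bbShape₂_pos (p q : ℝ) : 0 < bbShape₂ p q :=
  div_pos (mul_pos (by linarith [logistic_lt_one p]) (by linarith [logistic_lt_one q]))
    (logistic_pos q)

lemma tendsto_bbShape₁_atBot (q : ℝ) : Tendsto (bbShape₁ · q) atBot (𝓝 0) := by
  have h := (tendsto_logistic_atBot.mul_const (1 - logistic q)).div_const (logistic q)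
  rwa [zero_mul, zero_div] at h

lemma tendsto_bbShape₂_atBot (q : ℝ) :
    Tendsto (bbShape₂ · q) atBot (𝓝 ((1 - logistic q) / logistic q)) := by
  have h := ((tendsto_const_nhds (x := (1 : ℝ))).sub tendsto_logistic_atBot).mul_const
    (1 - logistic q) |>.div_const (logistic q)
  rwa [sub_zero, one_mul] at h

noncomputable def logBB (p q : ℝ) (m w : ℕ) : ℝ :=
  Real.log (betaBinomPmf (bbShape₁ p q) (bbShape₂ p q) m w)

lemma logBB_le_log_choose (p q : ℝ) {m w : ℕ} (hw : w ≤ m) :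
    logBB p q m w ≤ Real.log (m.choose w) :=
  Real.log_le_log (betaBinomPmf_pos (bbShape₁_pos p q) (bbShape₂_pos p q) hw)
    (betaBinomPmf_le_choose (bbShape₁_pos p q) (bbShape₂_pos p q) hw)

lemma logBB_zero_nonpos (p q : ℝ) (m : ℕ) : logBB p q m 0 ≤ 0 := by
  simpa using logBB_le_log_choose p q (Nat.zero_le m)

lemma tendsto_logBB_zero_atBot (q : ℝ) (m : ℕ) :
    Tendsto (logBB · q m 0) atBot (𝓝 0) := by
  set r := (1 - logistic q) / logistic q
  have hr : 0 < r := div_pos (by linarith [logistic_lt_one q]) (logistic_pos q)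
  have hprod : Tendsto
      (fun p => ∏ k ∈ range m, (bbShape₂ p q + k) / (bbShape₁ p q + bbShape₂ p q + k)) atBot (𝓝 (∏ k ∈ range m, (r + k) / (0 + r + k))) :=
    tendsto_finsetProd _ fun k _ =>
      ((tendsto_bbShape₂_atBot q).add_const _).div
        (((tendsto_bbShape₁_atBot q).add (tendsto_bbShape₂_atBot q)).add_const _)
        (by rw [zero_add]; positivity)
  rw [prod_eq_one fun k _ => by rw [zero_add, div_self (by positivity)]] at hprod
  have hlog := ((Real.continuousAt_log one_ne_zero).tendsto.comp hprod)
  rw [Real.log_one] at hlog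
  refine hlog.congr fun p => ?_
  rw [Function.comp_apply, logBB, betaBinomPmf_zero (bbShape₁_pos p q) (bbShape₂_pos p q)]

section Likelihood

variable {n : ℕ} {M W : Fin n → ℕ} {X : Fin n → ℝ}

lemma ellBB_eq_sum_logBB (β0 β1 β0s β1s : ℝ) :
    ellBB n M W X β0 β1 β0s β1s = ∑ i, logBB (β0 + β1 * X i) (β0s + β1s * X i) (M i) (W i) :=
  rfl

lemma ellBB_le_sum_log_choose (hWM : ∀ i, W i ≤ M i) (β0 β1 β0s β1s : ℝ) :
    ellBB n M W X β0 β1 β0s β1s ≤ ∑ i, Real.log ((M i).choose (W i)) :=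
  sum_le_sum fun i _ => logBB_le_log_choose _ _ (hWM i)

lemma ellBB_eq_add (hX : ∀ i, X i = 0 ∨ X i = 1) (h0 : ∀ i, X i = 0 → W i = 0)
    (β0 β1 β0s β1s : ℝ) :
    ellBB n M W X β0 β1 β0s β1s =
      ∑ i ∈ univ.filter (X · = 0), logBB β0 β0s (M i) 0 +
        ∑ i ∈ univ.filter (X · ≠ 0), logBB (β0 + β1) (β0s + β1s) (M i) (W i) := by
  rw [ellBB_eq_sum_logBB, ← sum_filter_add_sum_filter_not univ (X · = 0)]
  congr 1
  · refine sum_congr rfl fun i hi => ?_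
    have hXi : X i = 0 := (mem_filter.mp hi).2
    rw [hXi, h0 i hXi, mul_zero, mul_zero, add_zero, add_zero]
  · refine sum_congr rfl fun i hi => ?_
    rw [(hX i).resolve_left (mem_filter.mp hi).2, mul_one, mul_one]

lemma ellBB_le_sSup_null (hX : ∀ i, X i = 0 ∨ X i = 1) (hWM : ∀ i, W i ≤ M i)
    (h0 : ∀ i, X i = 0 → W i = 0) (β0 β1 β0s β1s : ℝ) :
    ellBB n M W X β0 β1 β0s β1s ≤
      sSup {y : ℝ | ∃ β0 β1 β0s : ℝ, ellBB n M W X β0 β1 β0s 0 = y} := by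
  set Z := univ.filter (X · = 0)
  have hbdd : BddAbove {y : ℝ | ∃ β0 β1 β0s : ℝ, ellBB n M W X β0 β1 β0s 0 = y} :=
    ⟨_, by rintro _ ⟨a, b, c, rfl⟩; exact ellBB_le_sum_log_choose hWM a b c 0⟩
  have hZ_nonpos : ∑ i ∈ Z, logBB β0 β0s (M i) 0 ≤ 0 :=
    sum_nonpos fun i _ => logBB_zero_nonpos _ _ _
  have hZ_tendsto : Tendsto (fun t => ∑ i ∈ Z, logBB t (β0s + β1s) (M i) 0) atBot (𝓝 0) := by
    simpa using tendsto_finsetSum Z fun i _ => tendsto_logBB_zero_atBot (β0s + β1s) (M i)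
  refine le_of_forall_sub_le fun ε hε => ?_
  obtain ⟨t, ht⟩ := (hZ_tendsto.eventually (eventually_gt_nhds (neg_lt_zero.mpr hε))).exists
  -- the null model at `(t, β0 + β1 - t, β0* + β1*)` reproduces the group `X = 1`
  have hnull := le_csSup hbdd ⟨t, β0 + β1 - t, β0s + β1s, rfl⟩
  rw [ellBB_eq_add hX h0, add_sub_cancel, add_zero] at hnull
  rw [ellBB_eq_add hX h0]
  linarith

end Likelihood

theorem lrtZeroCountGroup_general (n : ℕ) (M W : Fin n → ℕ) (X : Fin n → ℝ)
    (hX : ∀ i, X i = 0 ∨ X i = 1)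
    (hWM : ∀ i, W i ≤ M i)
    (h0 : ∀ i, X i = 0 → W i = 0) :
    2 * (sSup {y : ℝ | ∃ β0 β1 β0s β1s : ℝ, ellBB n M W X β0 β1 β0s β1s = y} -
      sSup {y : ℝ | ∃ β0 β1 β0s : ℝ, ellBB n M W X β0 β1 β0s 0 = y}) = 0 := by
  have hbdd : BddAbove {y : ℝ | ∃ β0 β1 β0s β1s : ℝ, ellBB n M W X β0 β1 β0s β1s = y} :=
    ⟨_, by rintro _ ⟨a, b, c, d, rfl⟩; exact ellBB_le_sum_log_choose hWM a b c d⟩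
  have hsup : sSup {y : ℝ | ∃ β0 β1 β0s β1s : ℝ, ellBB n M W X β0 β1 β0s β1s = y} =
      sSup {y : ℝ | ∃ β0 β1 β0s : ℝ, ellBB n M W X β0 β1 β0s 0 = y} :=
    le_antisymm
      (csSup_le ⟨_, 0, 0, 0, 0, rfl⟩ fun _ ⟨a, b, c, d, hy⟩ =>
        hy ▸ ellBB_le_sSup_null hX hWM h0 a b c d)
      (csSup_le_csSup hbdd ⟨_, 0, 0, 0, rfl⟩ fun _ ⟨a, b, c, hy⟩ => ⟨a, b, c, 0, hy⟩)
  rw [hsup, sub_self, mul_zero]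

/-- Theorem C.2: with a binary covariate, if the group with `X_i = 0` has all-zero
counts and the group with `X_i = 1` has positive total count, the likelihood ratio
test statistic for `H0 : β1* = 0` equals `0`. -/
theorem lrtZeroCountGroup (n : ℕ) (M W : Fin n → ℕ) (X : Fin n → ℝ)
    (hX : ∀ i, X i = 0 ∨ X i = 1)
    (hWM : ∀ i, W i ≤ M i)
    (h0 : ∀ i, X i = 0 → W i = 0)
    (h1 : ∃ i, X i = 1 ∧ 0 < W i) :
    2 * (sSup {y : ℝ | ∃ β0 β1 β0s β1s : ℝ, ellBB n M W X β0 β1 β0s β1s = y} -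
      sSup {y : ℝ | ∃ β0 β1 β0s : ℝ, ellBB n M W X β0 β1 β0s 0 = y}) = 0 :=
  lrtZeroCountGroup_general n M W X hX hWM h0
end

section
/- In the beta-binomial model, for fixed mu ∈ (0,1) and M ≥ 1, the probability of observing W = 0 is P(W = 0) = Π_{j=0}^{M−1} (a2 + j)/(a1 + a2 + j), where a1 = mu(1−phi)/phi and a2 = (1−mu)(1−phi)/phi, and this product is strictly increasing in the overdispersion parameter phi ∈ (0,1) when M ≥ 2. -/
open Finset Set

/-- Beta-binomial probability of zero counts as a function of `φ ∈ (0,1)`, with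
`a1 = μ(1-φ)/φ`, `a2 = (1-μ)(1-φ)/φ`. -/
noncomputable def probZero (mu : ℝ) (M : ℕ) (phi : ℝ) : ℝ :=
  betaFun (mu * (1 - phi) / phi) ((1 - mu) * (1 - phi) / phi + (M : ℝ)) /
    betaFun (mu * (1 - phi) / phi) ((1 - mu) * (1 - phi) / phi)

/-- The product form of `P(W = 0)`. -/
noncomputable def probZeroProd (mu : ℝ) (M : ℕ) (phi : ℝ) : ℝ :=
  ∏ j ∈ Finset.range M,
    ((1 - mu) * (1 - phi) / phi + (j : ℝ)) /
      (mu * (1 - phi) / phi + (1 - mu) * (1 - phi) / phi + (j : ℝ))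

lemma gamma_add_nat (x : ℝ) (hx : 0 < x) (n : ℕ) :
    Real.Gamma (x + n) = (∏ j ∈ Finset.range n, (x + j)) * Real.Gamma x := by
  induction n with
  | zero => simp
  | succ n ih =>
    have h : x + ((n + 1 : ℕ) : ℝ) = (x + n) + 1 := by push_cast; ring
    have hne : x + (n : ℝ) ≠ 0 := by positivity
    rw [h, Real.Gamma_add_one hne, ih, Finset.prod_range_succ]; ring

/-- For fixed `μ ∈ (0,1)` and `M ≥ 1`, the beta-binomial probability of `W = 0`
equals `∏_{j<M} (a2+j)/(a1+a2+j)`, and this product is strictly increasing in the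
overdispersion `φ ∈ (0,1)` when `M ≥ 2`. -/
theorem probZeroIncreasingInPhi (mu : ℝ) (hmu : mu ∈ Ioo (0:ℝ) 1) (M : ℕ) (hM : 1 ≤ M) :
    (∀ phi ∈ Ioo (0:ℝ) 1, probZero mu M phi = probZeroProd mu M phi) ∧
      (2 ≤ M → StrictMonoOn (probZeroProd mu M) (Ioo (0:ℝ) 1)) := by
  obtain ⟨hmu0, hmu1⟩ := hmu
  constructor
  · intro phi ⟨hp0, hp1⟩
    have hphi : (0:ℝ) < phi := hp0
    have h1p : (0:ℝ) < 1 - phi := by linarith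
    set a := mu * (1 - phi) / phi with ha
    set b := (1 - mu) * (1 - phi) / phi with hb
    have hapos : 0 < a := by positivity
    have hbpos : 0 < b := by
      have h1m : 0 < 1 - mu := by linarith
      positivity
    have habpos : 0 < a + b := by linarith
    have hGa := Real.Gamma_pos_of_pos hapos
    have hGb := Real.Gamma_pos_of_pos hbpos
    have hGab := Real.Gamma_pos_of_pos habpos
    have hPb : ∀ j ∈ Finset.range M, (0:ℝ) < b + j := by
      intro j _; positivity
    have hPab : ∀ j ∈ Finset.range M, (0:ℝ) < a + b + j := by
      intro j _; positivity
    have hPbpos : 0 < ∏ j ∈ Finset.range M, (b + (j:ℝ)) := Finset.prod_pos hPb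
    have hPabpos : 0 < ∏ j ∈ Finset.range M, (a + b + (j:ℝ)) := Finset.prod_pos hPab
    have h1 : Real.Gamma (b + M) = (∏ j ∈ Finset.range M, (b + (j:ℝ))) * Real.Gamma b :=
      gamma_add_nat b hbpos M
    have h2 : Real.Gamma (a + (b + M)) =
        (∏ j ∈ Finset.range M, (a + b + (j:ℝ))) * Real.Gamma (a + b) := by
      have : a + (b + (M:ℝ)) = (a + b) + (M:ℝ) := by ring
      rw [this, gamma_add_nat (a + b) habpos M]
    have hprod : probZeroProd mu M phi =
        (∏ j ∈ Finset.range M, (b + (j:ℝ))) / (∏ j ∈ Finset.range M, (a + b + (j:ℝ))) := by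
      rw [probZeroProd, ← Finset.prod_div_distrib]
    rw [probZero, ← ha, ← hb, betaFun, betaFun, h1, h2, hprod]
    field_simp
  · intro hM2
    intro x ⟨hx0, hx1⟩ y ⟨hy0, hy1⟩ hxy
    have h1mu : (0:ℝ) < 1 - mu := by linarith
    have h1x : (0:ℝ) < 1 - x := by linarith
    have h1y : (0:ℝ) < 1 - y := by linarith
    -- c strictly decreasing
    have hc : (1 - y) / y < (1 - x) / x := by
      rw [div_lt_div_iff₀ hy0 hx0]
      nlinarith
    set cx := (1 - x) / x with hcx
    set cy := (1 - y) / y with hcy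
    have hcxpos : 0 < cx := by positivity
    have hcypos : 0 < cy := by positivity
    rw [probZeroProd, probZeroProd]
    have key : ∀ j : ℕ, 0 < (j:ℝ) →
        ((1 - mu) * (1 - x) / x + (j : ℝ)) / (mu * (1 - x) / x + (1 - mu) * (1 - x) / x + (j : ℝ)) <
        ((1 - mu) * (1 - y) / y + (j : ℝ)) / (mu * (1 - y) / y + (1 - mu) * (1 - y) / y + (j : ℝ)) := by
      intro j hj
      have e1 : (1 - mu) * (1 - x) / x = (1 - mu) * cx := by rw [hcx]; ring
      have e2 : mu * (1 - x) / x + (1 - mu) * (1 - x) / x = cx := by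
        rw [hcx]; field_simp; try ring
      have e3 : (1 - mu) * (1 - y) / y = (1 - mu) * cy := by rw [hcy]; ring
      have e4 : mu * (1 - y) / y + (1 - mu) * (1 - y) / y = cy := by
        rw [hcy]; field_simp; try ring
      rw [e2, e4, e1, e3]
      rw [div_lt_div_iff₀ (by positivity) (by positivity)]
      nlinarith [mul_pos (mul_pos hmu0 hj) (sub_pos.mpr hc)]
    have hle : ∀ j ∈ Finset.range M,
        ((1 - mu) * (1 - x) / x + (j : ℝ)) / (mu * (1 - x) / x + (1 - mu) * (1 - x) / x + (j : ℝ)) ≤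
        ((1 - mu) * (1 - y) / y + (j : ℝ)) / (mu * (1 - y) / y + (1 - mu) * (1 - y) / y + (j : ℝ)) := by
      intro j _
      rcases Nat.eq_zero_or_pos j with hj | hj
      · subst hj
        have e2 : mu * (1 - x) / x + (1 - mu) * (1 - x) / x = cx := by
          rw [hcx]; field_simp; try ring
        have e4 : mu * (1 - y) / y + (1 - mu) * (1 - y) / y = cy := by
          rw [hcy]; field_simp; try ring
        simp only [Nat.cast_zero, add_zero]
        rw [e2, e4]
        have : (1 - mu) * (1 - x) / x / cx = 1 - mu := by
          rw [hcx]; field_simp; try ring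
        rw [this]
        have : (1 - mu) * (1 - y) / y / cy = 1 - mu := by
          rw [hcy]; field_simp; try ring
        rw [this]
      · exact le_of_lt (key j (by exact_mod_cast hj))
    have hpos : ∀ j ∈ Finset.range M,
        0 < ((1 - mu) * (1 - x) / x + (j : ℝ)) /
          (mu * (1 - x) / x + (1 - mu) * (1 - x) / x + (j : ℝ)) := by
      intro j _; positivity
    apply Finset.prod_lt_prod hpos hle
    refine ⟨1, Finset.mem_range.mpr (by omega), key 1 (by norm_num)⟩
end
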